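/- Let F ∈ ℂ, k ∈ ℤ∖{0}, a ∈ ℂ∖{0}, and m ∈ ℂ. On V define linear operators 𝕃_n, 𝕀_n by 𝕃_n(v_t) = t·v_{n+t} for t ≠ −n, 𝕃_n(v_{−n}) = 0, 𝕀_n(v_t) = 0 for t ≠ 0, 𝕀_0(v_0) = 0, and 𝕀_n(v_0) = F·v_n for n ≠ 0, and define the linear map φ by φ(v_t) = aᵗ·m·v_{kt}. Then for all n ∈ ℤ: φ ∘ 𝕃_n = (1/k)aⁿ·𝕃_{kn} ∘ φ and φ ∘ 𝕀_n = aⁿ·𝕀_{kn} ∘ φ; consequently (φ∘𝕃_n)(v_t) = t·a^{n+t}·m·v_{k(n+t)} for t ≠ −n, (φ∘𝕃_n)(v_{−n}) = 0, (φ∘𝕀_n)(v_t) = 0 for t ≠ 0, and (φ∘𝕀_n)(v_0) = F·aⁿ·m·v_{kn} for n ≠ 0. -/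

import Mathlib

/-- The ℂ-vector space with basis `{v t : t ∈ ℤ}` (finitely supported functions ℤ → ℂ). -/
abbrev V : Type := ℤ →₀ ℂ

/-- The basis vector `v t`. -/
noncomputable def v (t : ℤ) : V := Finsupp.single t 1

/-- The linear operator on `V` determined by its values on the basis vectors. -/
noncomputable def op (f : ℤ → V) : V →ₗ[ℂ] V := Finsupp.lift V ℂ ℤ f

/-- The operator `𝕃 n` of the module `Ṽ_F`:
`𝕃 n (v t) = t v (n+t)` for `t ≠ -n`, `𝕃 n (v (-n)) = 0`. -/
noncomputable def Lop (n : ℤ) : V →ₗ[ℂ] V :=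
  op fun t => if t = -n then 0 else (t : ℂ) • v (n + t)

/-- The operator `𝕀 n` of the module `Ṽ_F`:
`𝕀 n (v t) = 0` for `t ≠ 0`, `𝕀 0 (v 0) = 0`, and `𝕀 n (v 0) = F • v n` for `n ≠ 0`. -/
noncomputable def Iop (F : ℂ) (n : ℤ) : V →ₗ[ℂ] V :=
  op fun t => if t = 0 ∧ n ≠ 0 then F • v n else 0

/-- The twisting linear map `φ (v t) = aᵗ m • v (kt)`. -/
noncomputable def φmap (a m : ℂ) (k : ℤ) : V →ₗ[ℂ] V :=
  op fun t => (a ^ t * m) • v (k * t)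

/-! Both intertwining relations are checked on the basis `v t`. Since `k ≠ 0`, `t ↦ k t` is
injective, so the exceptional index `t = -n` of `𝕃 n` is exactly the one sent to the exceptional
index `-(k n)` of `𝕃 (k n)`; and `φ` scales `v t` by `aᵗ`, which turns the `aⁿ` in front of
`𝕃 (k n)` into the `a^(n+t)` of `φ (𝕃 n (v t))`. -/

lemma linearMap_ext_v {f g : V →ₗ[ℂ] V} (h : ∀ t, f (v t) = g (v t)) : f = g :=
  Finsupp.lhom_ext' fun t => LinearMap.ext_ring (h t)

@[simp]
lemma op_v (f : ℤ → V) (t : ℤ) : op f (v t) = f t := by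
  rw [op, v, Finsupp.lift_apply, Finsupp.sum_single_index (by simp), one_smul]

@[simp]
lemma φmap_v (a m : ℂ) (k t : ℤ) : φmap a m k (v t) = (a ^ t * m) • v (k * t) :=
  op_v _ t

@[simp]
lemma Lop_v (n t : ℤ) : Lop n (v t) = if t = -n then 0 else (t : ℂ) • v (n + t) :=
  op_v _ t

@[simp]
lemma Iop_v (F : ℂ) (n t : ℤ) : Iop F n (v t) = if t = 0 ∧ n ≠ 0 then F • v n else 0 :=
  op_v _ t

section Intertwine

variable {F a m : ℂ} {k : ℤ}

lemma φmap_Lop_v {n t : ℤ} (ht : t ≠ -n) :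
    φmap a m k (Lop n (v t)) = ((t : ℂ) * a ^ (n + t) * m) • v (k * (n + t)) := by
  rw [Lop_v, if_neg ht, map_smul, φmap_v, smul_smul, ← mul_assoc]

lemma φmap_Lop_v_neg (n : ℤ) : φmap a m k (Lop n (v (-n))) = 0 := by
  simp

lemma φmap_Iop_v_of_ne_zero (n : ℤ) {t : ℤ} (ht : t ≠ 0) :
    φmap a m k (Iop F n (v t)) = 0 := by
  simp [ht]

lemma φmap_Iop_v_zero {n : ℤ} (hn : n ≠ 0) :
    φmap a m k (Iop F n (v 0)) = (F * a ^ n * m) • v (k * n) := by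
  rw [Iop_v, if_pos ⟨rfl, hn⟩, map_smul, φmap_v, smul_smul]
  ring_nf

lemma Lop_φmap_v (hk : k ≠ 0) (ha : a ≠ 0) (n t : ℤ) :
    ((1 / (k : ℂ) * a ^ n) • Lop (k * n)) (φmap a m k (v t)) = φmap a m k (Lop n (v t)) := by
  by_cases ht : t = -n
  · subst ht
    simp
  · have hkt : k * t ≠ -(k * n) := by
      rw [← mul_neg]
      exact fun h => ht (mul_left_cancel₀ hk h)
    have hkC : (k : ℂ) ≠ 0 := Int.cast_ne_zero.mpr hk
    rw [φmap_Lop_v ht, LinearMap.smul_apply, φmap_v, map_smul, Lop_v, if_neg hkt,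
      smul_smul, smul_smul, ← mul_add, zpow_add₀ ha]
    congr 1
    push_cast
    field_simp

lemma Iop_φmap_v (hk : k ≠ 0) (n t : ℤ) :
    (a ^ n • Iop F (k * n)) (φmap a m k (v t)) = φmap a m k (Iop F n (v t)) := by
  by_cases ht : t = 0
  · subst ht
    by_cases hn : n = 0
    · simp [hn]
    · rw [φmap_Iop_v_zero hn, LinearMap.smul_apply, φmap_v, map_smul, Iop_v,
        if_pos ⟨mul_zero k, mul_ne_zero hk hn⟩, smul_smul, smul_smul, zpow_zero]
      ring_nf
  · simp [ht, hk]

end Intertwine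

theorem tildeV_F_intertwine (F : ℂ) (k : ℤ) (hk : k ≠ 0) (a : ℂ) (ha : a ≠ 0)
    (m : ℂ) :
    (∀ n : ℤ, φmap a m k ∘ₗ Lop n
        = ((1 / (k : ℂ) * a ^ n) • Lop (k * n)) ∘ₗ φmap a m k) ∧
    (∀ n : ℤ, φmap a m k ∘ₗ Iop F n = (a ^ n • Iop F (k * n)) ∘ₗ φmap a m k) ∧
    (∀ n t : ℤ, t ≠ -n → φmap a m k (Lop n (v t))
        = ((t : ℂ) * a ^ (n + t) * m) • v (k * (n + t))) ∧
    (∀ n : ℤ, φmap a m k (Lop n (v (-n))) = 0) ∧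
    (∀ n t : ℤ, t ≠ 0 → φmap a m k (Iop F n (v t)) = 0) ∧
    (∀ n : ℤ, n ≠ 0 → φmap a m k (Iop F n (v 0)) = (F * a ^ n * m) • v (k * n)) :=
  ⟨fun n => linearMap_ext_v fun t => (Lop_φmap_v hk ha n t).symm,
    fun n => linearMap_ext_v fun t => (Iop_φmap_v hk n t).symm,
    fun _ _ => φmap_Lop_v,
    φmap_Lop_v_neg,
    fun n _ => φmap_Iop_v_of_ne_zero n,
    fun _ => φmap_Iop_v_zero⟩
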